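/- arXiv:1104.0359 — 2 statements merged into one kernel-verified Lean document; each statement's English description precedes it below -/
import Mathlib

section
/- Let L and S be independent non-negative random variables with L \in RV_{-\beta}, S \in RV_{-\gamma}, 0 < \beta, \beta + 1 < \gamma, and suppose F_L has a positive, non-increasing density f_L on [x_0, \infty). Then (F_{L+S}(x) - F_L(x))/f_L(x) \to -E[S] as x \to \infty. -/
open MeasureTheory ProbabilityTheory Filter Topology

/-- Tail probability function of a random variable. -/
noncomputable def tail {Ω : Type*} [MeasurableSpace Ω] (P : Measure Ω) (X : Ω → ℝ) (x : ℝ) : ℝ :=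
  (P {ω | x < X ω}).toReal

/-- Distribution function of a random variable. -/
noncomputable def cdf' {Ω : Type*} [MeasurableSpace Ω] (P : Measure Ω) (X : Ω → ℝ) (x : ℝ) : ℝ :=
  (P {ω | X ω ≤ x}).toReal

/-- Value at Risk: the α-quantile. -/
noncomputable def VaR {Ω : Type*} [MeasurableSpace Ω] (P : Measure Ω) (X : Ω → ℝ) (α : ℝ) : ℝ :=
  sInf {x : ℝ | α ≤ cdf' P X x}

/-- f is regularly varying (at infinity) with index k. -/
def RegVary (f : ℝ → ℝ) (k : ℝ) : Prop :=
  ∀ t : ℝ, 0 < t → Tendsto (fun x => f (t * x) / f x) atTop (𝓝 (t ^ k))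

/-!
Write `T` for the tail of `L` and `ν` for the law of `S`. By independence
`F_{L+S}(x) - F_L(x) = -∫ (T (x - s) - T x) dν(s)`, and since `f_L` is non-increasing,
`s f_L(x) ≤ T (x - s) - T x ≤ s f_L(x - s)`. The monotone density theorem makes `f_L` regularly
varying with index `-(β + 1)`, so `f_L(x - s) / f_L(x) → 1` and the integrand divided by `f_L(x)`
tends to `s`. On `s ≤ x / 2` it is dominated by `K s`, because `f_L(x / 2) ≤ K f_L(x)`; the part
`s > x / 2` is at most `P(S > x / 2) / f_L(x)`, which tends to `0` because `P(S > x) / f_L(x)` is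
regularly varying with the negative index `β + 1 - γ`. Dominated convergence then gives `-E[S]`.
-/

open Set

lemma forall_le_of_map_two_mul_le {g : ℝ → ℝ} {M B : ℝ} (hM : 0 < M)
    (hbase : ∀ x ∈ Icc M (2 * M), g x ≤ B) (hstep : ∀ x, M ≤ x → g (2 * x) ≤ g x) :
    ∀ x, M ≤ x → g x ≤ B := by
  have key : ∀ n : ℕ, ∀ x ∈ Icc M (2 ^ n * M), g x ≤ B := by
    intro n
    induction n with
    | zero => exact fun x hx => hbase x ⟨hx.1, by linarith [hx.2, one_mul M]⟩
    | succ n ih =>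
      intro x hx
      rcases le_or_gt x (2 * M) with h | h
      · exact hbase x ⟨hx.1, h⟩
      · calc g x = g (2 * (x / 2)) := by ring_nf
          _ ≤ g (x / 2) := hstep _ (by linarith)
          _ ≤ B := ih _ ⟨by linarith, by rw [pow_succ] at hx; linarith [hx.2]⟩
  intro x hx
  obtain ⟨n, hn⟩ := pow_unbounded_of_one_lt (x / M) one_lt_two
  exact key n x ⟨hx, ((div_lt_iff₀ hM).mp hn).le⟩

namespace RegVary

variable {f g : ℝ → ℝ} {k l : ℝ}

lemma eventually_ne_zero (hf : RegVary f k) : ∀ᶠ x in atTop, f x ≠ 0 := by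
  have h := hf 1 one_pos
  simp only [one_mul, Real.one_rpow] at h
  filter_upwards [h.eventually_ne one_ne_zero] with x hx h0
  simp [h0] at hx

lemma eventually_pos (hf : RegVary f k) (h0 : ∀ x, 0 ≤ f x) : ∀ᶠ x in atTop, 0 < f x :=
  hf.eventually_ne_zero.mono fun x hx => (h0 x).lt_of_ne' hx

lemma div (hf : RegVary f k) (hg : RegVary g l) : RegVary (fun x => f x / g x) (k - l) := by
  intro t ht
  rw [Real.rpow_sub ht]
  refine ((hf t ht).div (hg t ht) (Real.rpow_pos_of_pos ht l).ne').congr fun x => ?_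
  exact div_div_div_comm _ _ _ _

lemma eventually_comp_mul_lt (hf : RegVary f k) {t r : ℝ} (ht : 0 < t) (hr : t ^ k < r)
    (hpos : ∀ᶠ x in atTop, 0 < f x) : ∀ᶠ x in atTop, f (t * x) < r * f x := by
  filter_upwards [(hf t ht).eventually (eventually_lt_nhds hr), hpos] with x h hx
  rwa [div_lt_iff₀ hx] at h

/-- Potter's bound, from the doubling estimate `f (2 * x) < 2 ^ (-p) * f x`. -/
lemma eventually_le_mul_rpow (hf : RegVary f (-k)) (hpos : ∀ᶠ x in atTop, 0 < f x) {a : ℝ}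
    (hbdd : ∀ b, BddAbove (f '' Icc a b)) {p : ℝ} (hp : 0 ≤ p) (hpk : p < k) :
    ∃ C, ∀ᶠ x in atTop, f x ≤ C * x ^ (-p) := by
  have hstep := hf.eventually_comp_mul_lt two_pos
    (Real.rpow_lt_rpow_of_exponent_lt one_lt_two (neg_lt_neg hpk)) hpos
  obtain ⟨M, hM⟩ :=
    ((hstep.and hpos).and (eventually_ge_atTop (max a 1))).exists_forall_of_atTop
  have hMa : a ≤ M := le_trans (le_max_left _ _) (hM M le_rfl).2
  have hM0 : 0 < M := lt_of_lt_of_le one_pos (le_trans (le_max_right _ _) (hM M le_rfl).2)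
  obtain ⟨B, hB⟩ := hbdd (2 * M)
  have hbound : ∀ x, M ≤ x → x ^ p * f x ≤ (2 * M) ^ p * B := by
    refine forall_le_of_map_two_mul_le hM0 (fun x hx => ?_) (fun x hx => ?_)
    · have hfx : f x ≤ B := hB ⟨x, ⟨hMa.trans hx.1, hx.2⟩, rfl⟩
      have hx0 : 0 < x := hM0.trans_le hx.1
      calc x ^ p * f x ≤ x ^ p * B := by gcongr
        _ ≤ (2 * M) ^ p * B := by
          gcongr
          · exact (hM x hx.1).1.2.le.trans hfx
          · exact hx.2
    · obtain ⟨⟨h2x, hfx⟩, -⟩ := hM x hx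
      have hx0 : 0 < x := hM0.trans_le hx
      calc (2 * x) ^ p * f (2 * x) ≤ (2 * x) ^ p * (2 ^ (-p) * f x) := by gcongr
        _ = x ^ p * f x := by
          rw [Real.mul_rpow zero_le_two hx0.le, Real.rpow_neg zero_le_two]
          field_simp
  refine ⟨(2 * M) ^ p * B, ?_⟩
  filter_upwards [eventually_ge_atTop M] with x hx
  have hx0 : 0 < x := hM0.trans_le hx
  rw [Real.rpow_neg hx0.le, ← div_eq_mul_inv, le_div_iff₀ (by positivity), mul_comm]
  exact hbound x hx

lemma tendsto_zero (hf : RegVary f (-k)) (hk : 0 < k) (hpos : ∀ᶠ x in atTop, 0 < f x) {a : ℝ}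
    (hbdd : ∀ b, BddAbove (f '' Icc a b)) : Tendsto f atTop (𝓝 0) := by
  obtain ⟨C, hC⟩ := hf.eventually_le_mul_rpow hpos hbdd (half_pos hk).le (half_lt_self hk)
  have hlim : Tendsto (fun x : ℝ => C * x ^ (-(k / 2))) atTop (𝓝 0) := by
    simpa using (tendsto_rpow_neg_atTop (half_pos hk)).const_mul C
  exact squeeze_zero' (hpos.mono fun x hx => hx.le) hC hlim

lemma tendsto_comp_sub_div (hf : RegVary f k) (hpos : ∀ᶠ x in atTop, 0 < f x) {a : ℝ}
    (hanti : AntitoneOn f (Ici a)) {s : ℝ} (hs : 0 ≤ s) :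
    Tendsto (fun x => f (x - s) / f x) atTop (𝓝 1) := by
  rw [tendsto_order]
  refine ⟨fun b hb => ?_, fun b hb => ?_⟩
  · filter_upwards [hpos, eventually_ge_atTop (a + s)] with x hx hxa
    rw [lt_div_iff₀ hx]
    calc b * f x < f x := mul_lt_of_lt_one_left hx hb
      _ ≤ f (x - s) := hanti (by simp; linarith) (by simp; linarith) (by linarith)
  · have hcont : Tendsto (fun e : ℝ => (1 - e) ^ k) (𝓝 0) (𝓝 1) := by
      have : ContinuousAt (fun e : ℝ => (1 - e) ^ k) 0 :=
        (continuousAt_const.sub continuousAt_id).rpow_const (Or.inl (by norm_num))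
      simpa using this.tendsto
    obtain ⟨e, ⟨he1, heb⟩, he0⟩ :=
      ((eventually_lt_nhds one_pos).and (hcont.eventually (eventually_lt_nhds hb))
        |>.and_frequently (frequently_gt_nhds 0)).exists
    have he : 0 < 1 - e := by linarith
    filter_upwards [hf.eventually_comp_mul_lt he heb hpos, hpos,
      eventually_ge_atTop (a / (1 - e)), eventually_ge_atTop (s / e)] with x hlt hx hxa hxs
    rw [div_le_iff₀' he] at hxa
    rw [div_le_iff₀' he0] at hxs
    rw [div_lt_iff₀ hx]
    refine lt_of_le_of_lt (hanti hxa ?_ (by linarith)) hlt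
    simp only [mem_Ici]
    linarith

lemma tendsto_comp_div_two_div {a b x₀ : ℝ} (hg : RegVary g (-a)) (hf : RegVary f (-b))
    (hba : b < a) (hganti : Antitone g) (hg0 : ∀ x, 0 ≤ g x) (hfanti : AntitoneOn f (Ici x₀))
    (hfpos : ∀ x, x₀ ≤ x → 0 < f x) :
    Tendsto (fun x => g (x / 2) / f x) atTop (𝓝 0) := by
  have hfpos' : ∀ᶠ x in atTop, 0 < f x := (eventually_ge_atTop x₀).mono hfpos
  have hbdd : ∀ c, BddAbove ((fun x => g x / f x) '' Icc x₀ c) := fun c =>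
    ⟨g x₀ / f c, by
      rintro _ ⟨x, hx, rfl⟩
      exact div_le_div₀ (hg0 _) (hganti hx.1) (hfpos c (hx.1.trans hx.2))
        (hfanti hx.1 (hx.1.trans hx.2 : x₀ ≤ c) hx.2)⟩
  have hquot : Tendsto (fun x => g x / f x) atTop (𝓝 0) :=
    ((show -a - -b = -(a - b) by ring) ▸ hg.div hf).tendsto_zero (sub_pos.mpr hba)
      ((hg.eventually_pos hg0).and hfpos' |>.mono fun x hx => div_pos hx.1 hx.2) hbdd
  have hlim := (hquot.comp (tendsto_id.atTop_div_const two_pos)).mul (hf _ one_half_pos)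
  rw [zero_mul] at hlim
  refine hlim.congr' ?_
  filter_upwards [eventually_ge_atTop (2 * x₀)] with x hx
  have := hfpos (x / 2) (by linarith)
  simp only [Function.comp_apply, id]
  rw [one_div_mul_eq_div, div_mul_div_cancel₀ this.ne']

end RegVary

/-- `T` plays the role of the tail `1 - F` of a distribution function `F` whose density on
`[x₀, ∞)` is `f`. -/
structure HasAntitoneTailDensity (T f : ℝ → ℝ) (x₀ : ℝ) : Prop where
  antitoneOn : AntitoneOn f (Ici x₀)
  eq_sub_integral : ∀ x, x₀ ≤ x → T x = T x₀ - ∫ y in x₀..x, f y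

namespace HasAntitoneTailDensity

variable {T f : ℝ → ℝ} {x₀ β k : ℝ}

lemma intervalIntegrable (hD : HasAntitoneTailDensity T f x₀) {a b : ℝ} (ha : x₀ ≤ a)
    (hab : a ≤ b) : IntervalIntegrable f volume a b :=
  (hD.antitoneOn.mono (by rw [uIcc_of_le hab]; exact Icc_subset_Ici_iff hab |>.mpr ha)
    ).intervalIntegrable

lemma sub_eq_integral (hD : HasAntitoneTailDensity T f x₀) {a b : ℝ} (ha : x₀ ≤ a)
    (hab : a ≤ b) : T a - T b = ∫ y in a..b, f y := by
  rw [hD.eq_sub_integral a ha, hD.eq_sub_integral b (ha.trans hab),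
    ← intervalIntegral.integral_interval_sub_left (hD.intervalIntegrable le_rfl (ha.trans hab))
      (hD.intervalIntegrable le_rfl ha)]
  ring

lemma mul_le_sub (hD : HasAntitoneTailDensity T f x₀) {a b : ℝ} (ha : x₀ ≤ a)
    (hab : a ≤ b) : (b - a) * f b ≤ T a - T b := by
  rw [hD.sub_eq_integral ha hab]
  simpa [mul_comm] using intervalIntegral.integral_mono_on hab intervalIntegrable_const
    (hD.intervalIntegrable ha hab)
    fun y hy => hD.antitoneOn (ha.trans hy.1) (ha.trans (hy.1.trans hy.2)) hy.2

lemma sub_le_mul (hD : HasAntitoneTailDensity T f x₀) {a b : ℝ} (ha : x₀ ≤ a)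
    (hab : a ≤ b) : T a - T b ≤ (b - a) * f a := by
  rw [hD.sub_eq_integral ha hab]
  simpa [mul_comm] using intervalIntegral.integral_mono_on hab (hD.intervalIntegrable ha hab)
    intervalIntegrable_const fun y hy => hD.antitoneOn ha (ha.trans hy.1) hy.1

lemma eventually_mul_tail_lt (hD : HasAntitoneTailDensity T f x₀) (hRV : RegVary T (-β))
    (hTpos : ∀ᶠ x in atTop, 0 < T x) {κ c : ℝ} (hκ : 1 < κ)
    (hc : c < (1 - κ ^ (-β)) / (κ - 1)) : ∀ᶠ x in atTop, c * T x < x * f x := by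
  have hκ1 : 0 < κ - 1 := by linarith
  rw [lt_div_iff₀ hκ1] at hc
  filter_upwards [hRV.eventually_comp_mul_lt (by linarith)
    (show κ ^ (-β) < 1 - c * (κ - 1) by linarith) hTpos, hTpos,
    eventually_ge_atTop (max x₀ 0)] with x hlt hTx hx
  have hwin := hD.sub_le_mul (le_of_max_le_left hx)
    (show x ≤ κ * x by nlinarith [le_of_max_le_right hx])
  refine lt_of_mul_lt_mul_left ?_ hκ1.le
  nlinarith

lemma eventually_lt_mul_tail (hD : HasAntitoneTailDensity T f x₀) (hRV : RegVary T (-β))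
    (hTpos : ∀ᶠ x in atTop, 0 < T x) {μ C : ℝ} (hμ0 : 0 < μ) (hμ1 : μ < 1)
    (hC : (1 - μ ^ (-β)) / (μ - 1) < C) : ∀ᶠ x in atTop, x * f x < C * T x := by
  have hμ : 0 < 1 - μ := by linarith
  rw [← neg_div_neg_eq, neg_sub, neg_sub, div_lt_iff₀ hμ] at hC
  filter_upwards [hRV.eventually_comp_mul_lt hμ0
    (show μ ^ (-β) < 1 + C * (1 - μ) by linarith) hTpos, hTpos,
    eventually_ge_atTop (max (x₀ / μ) 0)] with x hlt hTx hx
  have hwin := hD.mul_le_sub ((div_le_iff₀' hμ0).mp (le_of_max_le_left hx))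
    (show μ * x ≤ x by nlinarith [le_of_max_le_right hx])
  refine lt_of_mul_lt_mul_left ?_ hμ.le
  nlinarith

/-- The monotone density theorem. The window bounds `mul_le_sub`, `sub_le_mul` over
`[x, κ x]` and `[μ x, x]` squeeze `x f x / T x` between difference quotients of `u ↦ u ^ (-β)`
at `1`, which tend to `β`. -/
theorem tendsto_mul_div (hD : HasAntitoneTailDensity T f x₀) (hRV : RegVary T (-β))
    (hTpos : ∀ᶠ x in atTop, 0 < T x) : Tendsto (fun x => x * f x / T x) atTop (𝓝 β) := by
  have hslope : Tendsto (fun u : ℝ => (1 - u ^ (-β)) / (u - 1)) (𝓝[≠] 1) (𝓝 β) := by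
    have := (Real.hasDerivAt_rpow_const (p := -β) (Or.inl one_ne_zero)).tendsto_slope.neg
    simp only [Real.one_rpow, mul_one, neg_neg] at this
    refine this.congr fun u => ?_
    rw [slope_def_field, Real.one_rpow, ← neg_div, neg_sub]
  rw [tendsto_order]
  refine ⟨fun a ha => ?_, fun b hb => ?_⟩
  · obtain ⟨κ, ha', hκ⟩ := ((hslope.mono_left (nhdsGT_le_nhdsNE 1)).eventually
      (eventually_gt_nhds ha)).and self_mem_nhdsWithin |>.exists
    filter_upwards [hD.eventually_mul_tail_lt hRV hTpos hκ ha', hTpos] with x h hTx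
    rwa [lt_div_iff₀ hTx]
  · obtain ⟨μ, hb', hμ⟩ := ((hslope.mono_left (nhdsLT_le_nhdsNE 1)).eventually
      (eventually_lt_nhds hb)).and (Ioo_mem_nhdsLT zero_lt_one) |>.exists
    filter_upwards [hD.eventually_lt_mul_tail hRV hTpos hμ.1 hμ.2 hb', hTpos] with x h hTx
    rwa [div_lt_iff₀ hTx]

theorem regVary (hD : HasAntitoneTailDensity T f x₀) (hfpos : ∀ x, x₀ ≤ x → 0 < f x)
    (hRV : RegVary T (-β)) (hTpos : ∀ᶠ x in atTop, 0 < T x) (hβ : β ≠ 0) :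
    RegVary f (-(β + 1)) := by
  intro t ht
  have hm := hD.tendsto_mul_div hRV hTpos
  have htx : Tendsto (fun x => t * x) atTop atTop := tendsto_id.const_mul_atTop ht
  have hlim := (((hm.comp htx).div hm hβ).mul (hRV t ht)).div_const t
  rw [div_self hβ, one_mul, ← Real.rpow_sub_one ht.ne', show -β - 1 = -(β + 1) by ring] at hlim
  refine hlim.congr' ?_
  filter_upwards [hTpos, htx.eventually hTpos, htx.eventually (eventually_ge_atTop x₀),
    eventually_ge_atTop (max x₀ 1)] with x hTx hTtx htx₀ hx
  have hfx := hfpos x (le_of_max_le_left hx)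
  have hftx := hfpos _ htx₀
  have hx0 : 0 < x := lt_of_lt_of_le one_pos (le_of_max_le_right hx)
  simp only [Pi.div_apply, Function.comp_apply]
  field_simp

lemma tendsto_sub_comp_sub_div (hD : HasAntitoneTailDensity T f x₀)
    (hfpos : ∀ x, x₀ ≤ x → 0 < f x) (hfRV : RegVary f k) {s : ℝ} (hs : 0 ≤ s) :
    Tendsto (fun x => (T (x - s) - T x) / f x) atTop (𝓝 s) := by
  have hratio := (hfRV.tendsto_comp_sub_div (eventually_ge_atTop x₀ |>.mono hfpos)
    hD.antitoneOn hs).const_mul s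
  rw [mul_one] at hratio
  have hwin : ∀ᶠ x in atTop,
      s * f x ≤ T (x - s) - T x ∧ T (x - s) - T x ≤ s * f (x - s) := by
    filter_upwards [eventually_ge_atTop (x₀ + s)] with x hx
    have hx₀ : x₀ ≤ x - s := by linarith
    constructor
    · simpa only [sub_sub_cancel] using hD.mul_le_sub hx₀ (b := x) (by linarith)
    · simpa only [sub_sub_cancel] using hD.sub_le_mul hx₀ (b := x) (by linarith)
  refine tendsto_of_tendsto_of_tendsto_of_le_of_le' tendsto_const_nhds hratio ?_ ?_
    <;> filter_upwards [hwin, eventually_ge_atTop x₀] with x hx hx₀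
  · rw [le_div_iff₀ (hfpos x hx₀)]
    exact hx.1
  · rw [mul_div_assoc', div_le_div_iff_of_pos_right (hfpos x hx₀)]
    exact hx.2

lemma exists_sub_comp_sub_le_mul (hD : HasAntitoneTailDensity T f x₀)
    (hfpos : ∀ x, x₀ ≤ x → 0 < f x) (hfRV : RegVary f k) :
    ∃ K, ∀ᶠ x in atTop, ∀ s, 0 ≤ s → s ≤ x / 2 → T (x - s) - T x ≤ K * s * f x := by
  refine ⟨(1 / 2) ^ k + 1, ?_⟩
  filter_upwards [hfRV.eventually_comp_mul_lt one_half_pos (lt_add_one _)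
    (eventually_ge_atTop x₀ |>.mono hfpos), eventually_ge_atTop (2 * x₀)]
    with x hhalf hx s hs hsx
  have hx₀ : x₀ ≤ x - s := by linarith
  calc T (x - s) - T x ≤ (x - (x - s)) * f (x - s) := hD.sub_le_mul hx₀ (by linarith)
    _ ≤ s * f (1 / 2 * x) := by
      rw [sub_sub_cancel]
      exact mul_le_mul_of_nonneg_left (hD.antitoneOn (by simp; linarith) hx₀ (by linarith)) hs
    _ ≤ ((1 / 2) ^ k + 1) * s * f x := by nlinarith

end HasAntitoneTailDensity

section DominatedConvergence

variable {ν : Measure ℝ}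

lemma integrable_id_of_measureReal_Ioi_le [IsFiniteMeasure ν] (hν : ∀ᵐ s ∂ν, 0 ≤ s)
    {C p : ℝ} (hp : 1 < p) (h : ∀ᶠ t in atTop, ν.real (Ioi t) ≤ C * t ^ (-p)) :
    Integrable (fun s => s) ν := by
  obtain ⟨M, hM⟩ := (h.and (eventually_gt_atTop 0)).exists_forall_of_atTop
  have hM0 : 0 < M := (hM M le_rfl).2
  have hanti : Antitone fun t => ν.real (Ioi t) := fun a b hab =>
    measureReal_mono (Ioi_subset_Ioi hab)
  have hint : IntegrableOn (fun t => ν.real (Ioi t)) (Ioi 0) := by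
    rw [← Ioc_union_Ioi_eq_Ioi hM0.le]
    refine ((hanti.antitoneOn _).integrableOn_isCompact isCompact_Icc).mono_set
      Ioc_subset_Icc_self |>.union ?_
    refine ((integrableOn_Ioi_rpow_of_lt (a := -p) (by linarith) hM0).const_mul C).mono'
      hanti.measurable.aestronglyMeasurable ?_
    filter_upwards [ae_restrict_mem measurableSet_Ioi] with t ht
    rw [Real.norm_of_nonneg measureReal_nonneg]
    exact (hM t (le_of_lt ht)).1
  refine ⟨aestronglyMeasurable_id, (hasFiniteIntegral_iff_ofReal hν).mpr ?_⟩
  rw [lintegral_eq_lintegral_meas_lt ν hν aemeasurable_id]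
  refine lt_of_le_of_lt (le_of_eq ?_) hint.hasFiniteIntegral
  refine setLIntegral_congr_fun measurableSet_Ioi fun t _ => ?_
  rw [Real.enorm_of_nonneg measureReal_nonneg, ofReal_measureReal]
  rfl

lemma tendsto_setIntegral_Iic_half (hν : ∀ᵐ s ∂ν, 0 ≤ s) (hint : Integrable (fun s => s) ν)
    {F : ℝ → ℝ → ℝ} (hF : ∀ x, AEStronglyMeasurable (F x) ν)
    (hlim : ∀ s, 0 ≤ s → Tendsto (fun x => F x s) atTop (𝓝 s))
    (hdom : ∃ K, ∀ᶠ x in atTop, ∀ s, 0 ≤ s → s ≤ x / 2 → ‖F x s‖ ≤ K * s) :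
    Tendsto (fun x => ∫ s in Iic (x / 2), F x s ∂ν) atTop (𝓝 (∫ s, s ∂ν)) := by
  obtain ⟨K, hK⟩ := hdom
  simp_rw [← integral_indicator measurableSet_Iic]
  refine tendsto_integral_filter_of_dominated_convergence (fun s => |K| * s)
    (Eventually.of_forall fun x => (hF x).indicator measurableSet_Iic) ?_
    (hint.const_mul |K|) ?_
  · filter_upwards [hK] with x hKx
    filter_upwards [hν] with s hs
    by_cases hsx : s ≤ x / 2
    · rw [indicator_of_mem (show s ∈ Iic (x / 2) from hsx)]
      exact (hKx s hs hsx).trans (by gcongr; exact le_abs_self K)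
    · rw [indicator_of_notMem (show s ∉ Iic (x / 2) from hsx), norm_zero]
      positivity
  · filter_upwards [hν] with s hs
    refine (hlim s hs).congr' ?_
    filter_upwards [eventually_ge_atTop (2 * s)] with x hx
    rw [indicator_of_mem (show s ∈ Iic (x / 2) by simp only [mem_Iic]; linarith)]

variable {T f : ℝ → ℝ}

lemma tendsto_integral_sub_comp_sub_div [IsFiniteMeasure ν] (hν : ∀ᵐ s ∂ν, 0 ≤ s)
    (hint : Integrable (fun s => s) ν) (hT : Antitone T) (hT0 : ∀ x, 0 ≤ T x)
    (hT1 : ∀ x, T x ≤ 1) (hf : ∀ᶠ x in atTop, 0 < f x)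
    (hlim : ∀ s, 0 ≤ s → Tendsto (fun x => (T (x - s) - T x) / f x) atTop (𝓝 s))
    (hdom : ∃ K, ∀ᶠ x in atTop, ∀ s, 0 ≤ s → s ≤ x / 2 → T (x - s) - T x ≤ K * s * f x)
    (htail : Tendsto (fun x => ν.real (Ioi (x / 2)) / f x) atTop (𝓝 0)) :
    Tendsto (fun x => ∫ s, (T (x - s) - T x) / f x ∂ν) atTop (𝓝 (∫ s, s ∂ν)) := by
  set F : ℝ → ℝ → ℝ := fun x s => (T (x - s) - T x) / f x
  have hFmeas : ∀ x, Measurable (F x) := fun x =>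
    ((hT.measurable.comp (measurable_const.sub measurable_id)).sub_const _).div_const _
  have hFbound : ∀ x s, ‖F x s‖ ≤ 1 / |f x| := fun x s => by
    rw [Real.norm_eq_abs, abs_div]
    gcongr
    exact abs_sub_le_iff.mpr
      ⟨by linarith [hT0 x, hT1 (x - s)], by linarith [hT1 x, hT0 (x - s)]⟩
  have hnear := tendsto_setIntegral_Iic_half hν hint (fun x => (hFmeas x).aestronglyMeasurable)
    hlim (hdom.imp fun K hK => by
      filter_upwards [hK, hf] with x hKx hfx s hs hsx
      rw [Real.norm_of_nonneg (div_nonneg (sub_nonneg.mpr (hT (by linarith))) hfx.le),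
        div_le_iff₀ hfx]
      exact hKx s hs hsx)
  have hfar : Tendsto (fun x => ∫ s in Ioi (x / 2), F x s ∂ν) atTop (𝓝 0) := by
    refine squeeze_zero_norm' ?_ htail
    filter_upwards [hf] with x hfx
    calc ‖∫ s in Ioi (x / 2), F x s ∂ν‖ ≤ 1 / |f x| * ν.real (Ioi (x / 2)) :=
          norm_setIntegral_le_of_norm_le_const (measure_lt_top _ _) fun s _ => hFbound x s
      _ = ν.real (Ioi (x / 2)) / f x := by rw [abs_of_pos hfx]; ring
  refine (add_zero (∫ s, s ∂ν) ▸ hnear.add hfar).congr fun x => ?_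
  rw [← compl_Iic, integral_add_compl measurableSet_Iic
    ((integrable_const (1 / |f x|)).mono' (hFmeas x).aestronglyMeasurable
      (ae_of_all _ (hFbound x)))]

end DominatedConvergence

section Tail

variable {Ω : Type*} [MeasurableSpace Ω] (P : Measure Ω) (X : Ω → ℝ)

lemma tail_nonneg (x : ℝ) : 0 ≤ tail P X x := ENNReal.toReal_nonneg

lemma tail_le_one [IsProbabilityMeasure P] (x : ℝ) : tail P X x ≤ 1 := measureReal_le_one

lemma tail_antitone [IsFiniteMeasure P] : Antitone (tail P X) := fun _ _ hxy =>
  measureReal_mono fun _ (h : _ < X _) => hxy.trans_lt h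

variable {X}

lemma tail_eq_measureReal_map_Ioi (hX : Measurable X) (x : ℝ) :
    tail P X x = (P.map X).real (Ioi x) := by
  rw [measureReal_def, Measure.map_apply hX measurableSet_Ioi]
  rfl

lemma cdf'_eq_one_sub_tail [IsProbabilityMeasure P] (hX : Measurable X) (x : ℝ) :
    cdf' P X x = 1 - tail P X x := by
  rw [cdf', tail, ← measureReal_def, ← measureReal_def,
    ← probReal_compl_eq_one_sub (s := {ω | x < X ω}) (hX measurableSet_Ioi)]
  congr with ω
  simp

lemma cdf'_add_eq_integral [IsProbabilityMeasure P] {L S : Ω → ℝ} (hL : Measurable L)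
    (hS : Measurable S) (hindep : IndepFun L S P) (x : ℝ) :
    cdf' P (fun ω => L ω + S ω) x = ∫ s, cdf' P L (x - s) ∂(P.map S) := by
  have hA : MeasurableSet {p : ℝ × ℝ | p.2 + p.1 ≤ x} :=
    measurableSet_le (by fun_prop) measurable_const
  have hprod : P {ω | L ω + S ω ≤ x} = ∫⁻ s, (P.map L) (Iic (x - s)) ∂(P.map S) := by
    rw [show {ω | L ω + S ω ≤ x} = (fun ω => (S ω, L ω)) ⁻¹' {p | p.2 + p.1 ≤ x} from rfl,
      ← Measure.map_apply (hS.prodMk hL) hA, (indepFun_iff_map_prod_eq_prod_map_map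
        hS.aemeasurable hL.aemeasurable).mp hindep.symm, Measure.prod_apply hA]
    congr with s
    congr with l
    simp [le_sub_iff_add_le]
  have hmeas : Measurable fun s => (P.map L) (Iic (x - s)) :=
    (Monotone.measurable fun _ _ h => measure_mono (Iic_subset_Iic.mpr h)).comp
      (measurable_const.sub measurable_id)
  rw [cdf', hprod,
    ← integral_toReal hmeas.aemeasurable (ae_of_all _ fun _ => measure_lt_top _ _)]
  congr with s
  rw [Measure.map_apply hL measurableSet_Iic]
  rfl

lemma cdf'_add_sub_cdf' [IsProbabilityMeasure P] {L S : Ω → ℝ} (hL : Measurable L)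
    (hS : Measurable S) (hindep : IndepFun L S P) (x : ℝ) :
    cdf' P (fun ω => L ω + S ω) x - cdf' P L x
      = -∫ s, (tail P L (x - s) - tail P L x) ∂(P.map S) := by
  have : IsProbabilityMeasure (P.map S) := Measure.isProbabilityMeasure_map hS.aemeasurable
  have hint : Integrable (fun s => tail P L (x - s)) (P.map S) :=
    .of_bound ((tail_antitone P L).measurable.comp (measurable_const.sub measurable_id)
      ).aestronglyMeasurable 1 (ae_of_all _ fun s => by
        rw [Real.norm_of_nonneg (tail_nonneg P L _)]; exact tail_le_one P L _)
  simp_rw [cdf'_add_eq_integral P hL hS hindep, cdf'_eq_one_sub_tail P hL]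
  rw [integral_sub (integrable_const _) hint, integral_sub hint (integrable_const _)]
  simp

lemma hasAntitoneTailDensity_tail [IsProbabilityMeasure P] (hX : Measurable X) {f : ℝ → ℝ}
    {x₀ : ℝ} (hf : ∀ x y, x₀ ≤ x → x ≤ y → f y ≤ f x)
    (hdens : ∀ x, x₀ ≤ x → cdf' P X x = cdf' P X x₀ + ∫ y in x₀..x, f y) :
    HasAntitoneTailDensity (tail P X) f x₀ where
  antitoneOn x hx y _ hxy := hf x y hx hxy
  eq_sub_integral x hx := by
    linarith [hdens x hx, cdf'_eq_one_sub_tail P hX x, cdf'_eq_one_sub_tail P hX x₀]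

lemma integrable_id_map_of_regVary_tail [IsProbabilityMeasure P] (hX : Measurable X)
    (hX0 : ∀ ω, 0 ≤ X ω) {γ : ℝ} (hγ : 1 < γ) (hRV : RegVary (tail P X) (-γ)) :
    Integrable (fun s => s) (P.map X) := by
  have : IsProbabilityMeasure (P.map X) := Measure.isProbabilityMeasure_map hX.aemeasurable
  obtain ⟨C, hC⟩ := hRV.eventually_le_mul_rpow (hRV.eventually_pos (tail_nonneg P X))
    (a := 0) (fun _ => ⟨1, by rintro _ ⟨x, -, rfl⟩; exact tail_le_one P X x⟩)
    (p := (1 + γ) / 2) (by linarith) (by linarith)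
  exact integrable_id_of_measureReal_Ioi_le
    ((ae_map_iff hX.aemeasurable measurableSet_Ici).mpr (ae_of_all _ hX0)) (by linarith)
    (hC.mono fun t ht => tail_eq_measureReal_map_Ioi P hX t ▸ ht)

end Tail

theorem stmt13_general {Ω : Type*} [MeasurableSpace Ω] (P : Measure Ω) [IsProbabilityMeasure P]
    (L S : Ω → ℝ) (hL : Measurable L) (hS : Measurable S)
    (hindep : IndepFun L S P)
    (hSpos : ∀ ω, 0 ≤ S ω)
    (β γ : ℝ) (hβ : 0 < β) (hβγ : β + 1 < γ)
    (hRVL : RegVary (tail P L) (-β)) (hRVS : RegVary (tail P S) (-γ))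
    (x₀ : ℝ) (fL : ℝ → ℝ)
    (hfLpos : ∀ x, x₀ ≤ x → 0 < fL x)
    (hfLmono : ∀ x y, x₀ ≤ x → x ≤ y → fL y ≤ fL x)
    (hfLdens : ∀ x, x₀ ≤ x → cdf' P L x = cdf' P L x₀ + ∫ y in x₀..x, fL y)
 :
    Tendsto (fun x => (cdf' P (fun ω => L ω + S ω) x - cdf' P L x) / fL x)
      atTop (𝓝 (-∫ ω, S ω ∂P)) := by
  have : IsProbabilityMeasure (P.map S) := Measure.isProbabilityMeasure_map hS.aemeasurable
  have hD := hasAntitoneTailDensity_tail P hL hfLmono hfLdens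
  have hfRV := hD.regVary hfLpos hRVL (hRVL.eventually_pos (tail_nonneg P L)) hβ.ne'
  have htail := hRVS.tendsto_comp_div_two_div hfRV hβγ (tail_antitone P S) (tail_nonneg P S)
    hD.antitoneOn hfLpos
  simp_rw [tail_eq_measureReal_map_Ioi P hS] at htail
  have hlim := tendsto_integral_sub_comp_sub_div
    ((ae_map_iff hS.aemeasurable measurableSet_Ici).mpr (ae_of_all _ hSpos))
    (integrable_id_map_of_regVary_tail P hS hSpos (by linarith) hRVS)
    (tail_antitone P L) (tail_nonneg P L) (tail_le_one P L)
    ((eventually_ge_atTop x₀).mono hfLpos)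
    (fun s hs => hD.tendsto_sub_comp_sub_div hfLpos hfRV hs)
    (hD.exists_sub_comp_sub_le_mul hfLpos hfRV) htail
  rw [integral_map (f := fun s => s) hS.aemeasurable aestronglyMeasurable_id] at hlim
  refine hlim.neg.congr fun x => ?_
  rw [cdf'_add_sub_cdf' P hL hS hindep, integral_div, neg_div]

theorem stmt13 {Ω : Type*} [MeasurableSpace Ω] (P : Measure Ω) [IsProbabilityMeasure P]
    (L S : Ω → ℝ) (hL : Measurable L) (hS : Measurable S)
    (hindep : IndepFun L S P)
    (hLpos : ∀ ω, 0 ≤ L ω) (hSpos : ∀ ω, 0 ≤ S ω)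
    (β γ : ℝ) (hβ : 0 < β) (hβγ : β + 1 < γ)
    (hRVL : RegVary (tail P L) (-β)) (hRVS : RegVary (tail P S) (-γ))
    (x₀ : ℝ) (hx₀ : 0 < x₀) (fL : ℝ → ℝ)
    (hfLpos : ∀ x, x₀ ≤ x → 0 < fL x)
    (hfLmono : ∀ x y, x₀ ≤ x → x ≤ y → fL y ≤ fL x)
    (hfLdens : ∀ x, x₀ ≤ x → cdf' P L x = cdf' P L x₀ + ∫ y in x₀..x, fL y)
 :
    Tendsto (fun x => (cdf' P (fun ω => L ω + S ω) x - cdf' P L x) / fL x)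
      atTop (𝓝 (-∫ ω, S ω ∂P)) :=
  stmt13_general P L S hL hS hindep hSpos β γ hβ hβγ hRVL hRVS x₀ fL hfLpos hfLmono hfLdens
end

section
/- Let U \in RV_{-\beta} be a non-negative random variable with positive, non-increasing, continuous density f_U on [x_0,\infty), let S be a non-negative random variable independent of U, and let g be a measurable function with 0 < a \le g(s) \le b. Define L = g(S)U. Then the conditional density of L given S = s equals f_L(x | S = s) = f_U(x/g(s))/g(s), and for any compact set K \subset (0,1], ess sup_{s \ge 0} sup_{t \in K} | f_L(tx | S = s)/f_L(x | S = s) - t^{-\beta - 1} | \to 0 as x \to \infty. -/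
open MeasureTheory ProbabilityTheory Filter Topology

/-!
Write `T` for the tail of `U`. Since `f_U` is non-increasing, comparing
`T(tx) - T(x) = ∫_{tx}^{x} f_U` with `(1 - t) x f_U(x)` bounds `x f_U(x) / T(x)` from above
(for `t < 1`) and from below (for `t > 1`) by `(1 - T(tx)/T(x)) / (t - 1)`, which tends to
`(1 - t^{-β}) / (t - 1)`, and this tends to `β` as `t → 1`: `x f_U(x) / T(x) → β` (monotone
density theorem). Hence `f_U(tx)/f_U(x) → t^{-β-1}` for every `t > 0`. As functions of `t` these
ratios are eventually non-increasing and their limit is continuous, so the convergence is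
locally uniform on `(0, ∞)`, hence uniform on compact sets. The bounds `a ≤ g ≤ b` make
`x / g(s) → ∞` uniformly in `s`, and the factor `1 / g(s)` cancels in the ratio of densities.
-/

open Set

lemma tendsto_one_sub_rpow_neg_div_sub_one (β : ℝ) :
    Tendsto (fun t : ℝ => (1 - t ^ (-β)) / (t - 1)) (𝓝[≠] 1) (𝓝 β) := by
  have hslope := hasDerivAt_iff_tendsto_slope.mp
    (by simpa using Real.hasDerivAt_rpow_const (x := 1) (p := -β) (Or.inl one_ne_zero))
  simpa only [neg_neg] using hslope.neg.congr fun t => by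
    rw [slope_def_field, Real.one_rpow, ← neg_div, neg_sub]

lemma RegVary.eventually_ne_zero_s15 {f : ℝ → ℝ} {k : ℝ} (hf : RegVary f k) :
    ∀ᶠ x in atTop, f x ≠ 0 := by
  have h := (hf 1 one_pos).eventually_ne (by simp : (1 : ℝ) ^ k ≠ 0)
  filter_upwards [h] with x hx hfx
  simp [hfx] at hx

lemma tendstoLocallyUniformlyOn_of_antitoneOn {ι : Type*} {l : Filter ι} {F : ι → ℝ → ℝ}
    {h : ℝ → ℝ} {s : Set ℝ} (hs : IsOpen s) (hh : ContinuousOn h s)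
    (hF : ∀ p ∈ s, ∀ q ∈ s, ∀ᶠ i in l, AntitoneOn (F i) (Icc p q))
    (hlim : ∀ t ∈ s, Tendsto (F · t) l (𝓝 (h t))) :
    TendstoLocallyUniformlyOn F h l s := by
  rw [Metric.tendstoLocallyUniformlyOn_iff]
  intro ε hε t₀ ht₀
  have hε3 : 0 < ε / 3 := by positivity
  have hnear : ∀ᶠ t in 𝓝 t₀, t ∈ s ∧ dist (h t) (h t₀) < ε / 3 :=
    (hs.eventually_mem ht₀).and ((hh.continuousAt (hs.mem_nhds ht₀)).eventually
      (Metric.ball_mem_nhds _ hε3))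
  obtain ⟨δ, hδ, hball⟩ := Metric.eventually_nhds_iff.1 hnear
  set p := t₀ - δ / 2 with hp_def
  set q := t₀ + δ / 2 with hq_def
  have hIcc : ∀ t ∈ Icc p q, t ∈ s ∧ dist (h t) (h t₀) < ε / 3 :=
    fun t ht => hball (by
      rw [Real.dist_eq, abs_lt]
      constructor <;> linarith [ht.1, ht.2])
  have hp : p ∈ Icc p q := ⟨le_rfl, by linarith⟩
  have hq : q ∈ Icc p q := ⟨by linarith, le_rfl⟩
  refine ⟨Icc p q, nhdsWithin_le_nhds (Icc_mem_nhds (by linarith) (by linarith)), ?_⟩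
  filter_upwards [hF p (hIcc p hp).1 q (hIcc q hq).1,
    (hlim p (hIcc p hp).1).eventually (Metric.ball_mem_nhds _ hε3),
    (hlim q (hIcc q hq).1).eventually (Metric.ball_mem_nhds _ hε3)] with i hanti hFp hFq t ht
  have hFt_le : F i t ≤ F i p := hanti hp ht ht.1
  have hFt_ge : F i q ≤ F i t := hanti ht hq ht.2
  have hht := (hIcc t ht).2
  have hhp := (hIcc p hp).2
  have hhq := (hIcc q hq).2
  rw [Real.dist_eq, abs_lt] at hFp hFq hht hhp hhq ⊢
  constructor <;> linarith

lemma AntitoneOn.mul_le_intervalIntegral {f : ℝ → ℝ} {u v : ℝ} (hf : AntitoneOn f (Icc u v))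
    (huv : u ≤ v) : (v - u) * f v ≤ ∫ y in u..v, f y := by
  have := intervalIntegral.integral_mono_on (μ := volume) huv intervalIntegrable_const
    (AntitoneOn.intervalIntegrable (by rwa [uIcc_of_le huv]))
    (fun y hy => hf hy (right_mem_Icc.2 huv) hy.2)
  simpa [mul_comm] using this

lemma AntitoneOn.intervalIntegral_le_mul {f : ℝ → ℝ} {u v : ℝ} (hf : AntitoneOn f (Icc u v))
    (huv : u ≤ v) : ∫ y in u..v, f y ≤ (v - u) * f u := by
  have := intervalIntegral.integral_mono_on (μ := volume) huv
    (AntitoneOn.intervalIntegrable (by rwa [uIcc_of_le huv])) intervalIntegrable_const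
    (fun y hy => hf (left_mem_Icc.2 huv) hy hy.1)
  simpa [mul_comm] using this

section MonotoneDensity

variable {f T : ℝ → ℝ} {x₀ : ℝ} (hf : AntitoneOn f (Ici x₀))
  (hT : ∀ u v, x₀ ≤ u → u ≤ v → T u - T v = ∫ y in u..v, f y)
include hf hT

lemma mul_div_le_one_sub_div_div_sub_one {t x : ℝ} (ht1 : t < 1) (hx0 : 0 ≤ x)
    (hx : x₀ ≤ t * x) (hTx : 0 < T x) :
    x * f x / T x ≤ (1 - T (t * x) / T x) / (t - 1) := by
  have htx : t * x ≤ x := by nlinarith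
  have hint : (x - t * x) * f x ≤ T (t * x) - T x := by
    rw [hT _ _ hx htx]
    exact (hf.mono fun y hy => hx.trans hy.1).mul_le_intervalIntegral htx
  have hrhs : (1 - T (t * x) / T x) / (t - 1) = (T (t * x) - T x) / ((1 - t) * T x) := by
    have : 1 - t ≠ 0 := by linarith
    have : t - 1 ≠ 0 := by linarith
    field_simp
    ring
  rw [hrhs, div_le_div_iff₀ hTx (by nlinarith)]
  nlinarith [mul_le_mul_of_nonneg_right hint hTx.le]

lemma one_sub_div_div_sub_one_le_mul_div {t x : ℝ} (ht1 : 1 < t) (hx0 : 0 ≤ x)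
    (hx : x₀ ≤ x) (hTx : 0 < T x) :
    (1 - T (t * x) / T x) / (t - 1) ≤ x * f x / T x := by
  have htx : x ≤ t * x := by nlinarith
  have hint : T x - T (t * x) ≤ (t * x - x) * f x := by
    rw [hT _ _ hx htx]
    exact (hf.mono fun y hy => hx.trans hy.1).intervalIntegral_le_mul htx
  have hlhs : (1 - T (t * x) / T x) / (t - 1) = (T x - T (t * x)) / ((t - 1) * T x) := by
    have : t - 1 ≠ 0 := by linarith
    field_simp
  rw [hlhs, div_le_div_iff₀ (by nlinarith) hTx]
  nlinarith [mul_le_mul_of_nonneg_right hint hTx.le]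

theorem tendsto_mul_div_of_regVary {β : ℝ} (hTpos : ∀ᶠ x in atTop, 0 < T x)
    (hRV : RegVary T (-β)) : Tendsto (fun x => x * f x / T x) atTop (𝓝 β) := by
  have hq := tendsto_one_sub_rpow_neg_div_sub_one β
  have hQ : ∀ t, 0 < t → Tendsto (fun x => (1 - T (t * x) / T x) / (t - 1)) atTop
      (𝓝 ((1 - t ^ (-β)) / (t - 1))) :=
    fun t ht => (tendsto_const_nhds.sub (hRV t ht)).div_const _
  rw [tendsto_order]
  constructor
  · intro c hc
    obtain ⟨t, hct, ht1⟩ := ((hq.mono_left (nhdsGT_le_nhdsNE 1)).eventually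
      (lt_mem_nhds hc)).and self_mem_nhdsWithin |>.exists
    filter_upwards [(hQ t (zero_lt_one.trans ht1)).eventually (lt_mem_nhds hct), hTpos,
      eventually_ge_atTop (max x₀ 0)] with x hcQ hTx hx
    exact hcQ.trans_le (one_sub_div_div_sub_one_le_mul_div hf hT ht1 (le_of_max_le_right hx)
      (le_of_max_le_left hx) hTx)
  · intro c hc
    obtain ⟨t, htc, ht0, ht1⟩ := ((hq.mono_left (nhdsLT_le_nhdsNE 1)).eventually
      (gt_mem_nhds hc)).and (Ioo_mem_nhdsLT zero_lt_one) |>.exists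
    filter_upwards [(hQ t ht0).eventually (gt_mem_nhds htc), hTpos,
      (tendsto_id.const_mul_atTop ht0).eventually_ge_atTop x₀, eventually_ge_atTop 0]
      with x hQc hTx htx hx0
    exact (mul_div_le_one_sub_div_div_sub_one hf hT ht1 hx0 htx hTx).trans_lt hQc

end MonotoneDensity

lemma RegVary.of_tendsto_mul_div {f T : ℝ → ℝ} {β : ℝ} (hβ : β ≠ 0)
    (hr : Tendsto (fun x => x * f x / T x) atTop (𝓝 β)) (hRV : RegVary T (-β)) :
    RegVary f (-β - 1) := by
  intro t ht
  have hlim : Tendsto (fun x => (t * x) * f (t * x) / T (t * x) / (x * f x / T x)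
      * (T (t * x) / T x) * t⁻¹) atTop (𝓝 (β / β * t ^ (-β) * t⁻¹)) :=
    ((hr.comp (tendsto_id.const_mul_atTop ht)).div hr hβ |>.mul (hRV t ht)).mul_const _
  rw [div_self hβ, one_mul, ← div_eq_mul_inv, ← Real.rpow_sub_one ht.ne'] at hlim
  refine hlim.congr' ?_
  filter_upwards [hr.eventually_ne hβ, hRV.eventually_ne_zero_s15,
    (tendsto_id.const_mul_atTop ht).eventually hRV.eventually_ne_zero_s15] with x hx hTx hTtx
  have hfx : f x ≠ 0 := fun h => hx (by simp [h])
  have hx0 : x ≠ 0 := fun h => hx (by simp [h])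
  have ht0 : t ≠ 0 := ht.ne'
  simp only [id] at hTtx
  field_simp

lemma RegVary.tendstoUniformlyOn_div_of_antitoneOn {f : ℝ → ℝ} {k x₀ : ℝ} (hRV : RegVary f k)
    (hf : AntitoneOn f (Ici x₀)) (hf0 : ∀ᶠ y in atTop, 0 ≤ f y) {K : Set ℝ} (hK : IsCompact K)
    (hK0 : K ⊆ Ioi 0) :
    TendstoUniformlyOn (fun y t => f (t * y) / f y) (fun t => t ^ k) atTop K := by
  have hcont : ContinuousOn (fun t : ℝ => t ^ k) (Ioi 0) := fun t ht =>
    (Real.continuousAt_rpow_const _ _ (Or.inl (ne_of_gt ht))).continuousWithinAt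
  have hanti : ∀ p ∈ Ioi (0 : ℝ), ∀ q ∈ Ioi (0 : ℝ),
      ∀ᶠ y in atTop, AntitoneOn (fun t => f (t * y) / f y) (Icc p q) := by
    intro p hp q _
    filter_upwards [hf0, eventually_ge_atTop (x₀ / p), eventually_ge_atTop 0]
      with y hfy hy hy0 t ht t' ht' htt'
    have hpy : x₀ ≤ p * y := by rwa [div_le_iff₀' hp] at hy
    have hty : x₀ ≤ t * y := hpy.trans (mul_le_mul_of_nonneg_right ht.1 hy0)
    have htty : t * y ≤ t' * y := mul_le_mul_of_nonneg_right htt' hy0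
    exact div_le_div_of_nonneg_right (hf hty (hty.trans htty) htty) hfy
  exact (tendstoLocallyUniformlyOn_iff_tendstoUniformlyOn_of_compact hK).1
    ((tendstoLocallyUniformlyOn_of_antitoneOn isOpen_Ioi hcont hanti hRV).mono hK0)

section Distribution

variable {Ω : Type*} [MeasurableSpace Ω] {P : Measure Ω} {U : Ω → ℝ}

lemma tail_eq_one_sub_cdf' [IsProbabilityMeasure P] (hU : Measurable U) (x : ℝ) :
    tail P U x = 1 - cdf' P U x := by
  have hcompl : {ω | x < U ω} = {ω | U ω ≤ x}ᶜ := by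
    ext ω
    simp
  simp only [tail, cdf', ← measureReal_def, hcompl]
  exact probReal_compl_eq_one_sub (hU measurableSet_Iic)

lemma cdf'_const_mul {c : ℝ} (hc : 0 < c) (x : ℝ) :
    cdf' P (fun ω => c * U ω) x = cdf' P U (x / c) := by
  simp only [cdf', le_div_iff₀ hc, mul_comm]

variable {f : ℝ → ℝ} {x₀ : ℝ} (hf : AntitoneOn f (Ici x₀))
  (hdens : ∀ x, x₀ ≤ x → cdf' P U x = cdf' P U x₀ + ∫ y in x₀..x, f y)
include hf hdens

lemma cdf'_sub_eq_integral {u v : ℝ} (hu : x₀ ≤ u) (hv : x₀ ≤ v) :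
    cdf' P U v - cdf' P U u = ∫ y in u..v, f y := by
  have hint : ∀ w, x₀ ≤ w → IntervalIntegrable f volume x₀ w := fun w hw =>
    (hf.mono (by rw [uIcc_of_le hw]; exact Icc_subset_Ici_self)).intervalIntegrable
  rw [hdens v hv, hdens u hu,
    ← intervalIntegral.integral_interval_sub_left (hint v hv) (hint u hu)]
  ring

lemma cdf'_const_mul_sub_eq_integral {c u v : ℝ} (hc : 0 < c) (hu : x₀ * c ≤ u)
    (hv : x₀ * c ≤ v) :
    cdf' P (fun ω => c * U ω) v - cdf' P (fun ω => c * U ω) u = ∫ y in u..v, f (y / c) / c := by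
  rw [cdf'_const_mul hc, cdf'_const_mul hc,
    cdf'_sub_eq_integral hf hdens ((le_div_iff₀ hc).2 hu) ((le_div_iff₀ hc).2 hv),
    intervalIntegral.integral_div, intervalIntegral.integral_comp_div f hc.ne', smul_eq_mul,
    mul_div_cancel_left₀ _ hc.ne']

lemma tail_sub_eq_integral [IsProbabilityMeasure P] (hU : Measurable U) {u v : ℝ} (hu : x₀ ≤ u)
    (huv : u ≤ v) : tail P U u - tail P U v = ∫ y in u..v, f y := by
  rw [tail_eq_one_sub_cdf' hU, tail_eq_one_sub_cdf' hU,
    ← cdf'_sub_eq_integral hf hdens hu (hu.trans huv)]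
  ring

end Distribution

theorem stmt15_general {Ω : Type*} [MeasurableSpace Ω] (P : Measure Ω) [IsProbabilityMeasure P]
    (U S : Ω → ℝ) (hU : Measurable U)
    (g : ℝ → ℝ) (a b : ℝ) (ha : 0 < a)
    (hgab : ∀ s, a ≤ g s ∧ g s ≤ b)
    (β x₀ : ℝ) (hβ : 0 < β) (hx₀ : 0 < x₀)
    (hRVU : RegVary (tail P U) (-β))
    (fU : ℝ → ℝ)
    (hfUpos : ∀ x, x₀ ≤ x → 0 < fU x)
    (hfUmono : ∀ x y, x₀ ≤ x → x ≤ y → fU y ≤ fU x)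
    (hfUdens : ∀ x, x₀ ≤ x → cdf' P U x = cdf' P U x₀ + ∫ y in x₀..x, fU y) :
    -- the conditional density of L = g(S)U given S = s is fU (x / g s) / g s ...
    (∀ s x : ℝ, x₀ * b ≤ x →
      (P {ω | g s * U ω ≤ x}).toReal =
        (P {ω | g s * U ω ≤ x₀ * b}).toReal + ∫ y in (x₀ * b)..x, fU (y / g s) / g s) ∧
    -- ... and the uniform (essential supremum) regular-variation condition holds
    (∀ K : Set ℝ, K ⊆ Set.Ioc 0 1 → IsCompact K → ∀ ε > 0, ∃ X₀ : ℝ, ∀ x ≥ X₀,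
      ∀ᵐ s ∂(P.map S), ∀ t ∈ K,
        |(fU (t * x / g s) / g s) / (fU (x / g s) / g s) - t ^ (-β - 1)| ≤ ε) := by
  have hf : AntitoneOn fU (Ici x₀) := fun x hx y _ hxy => hfUmono x y hx hxy
  have hgpos : ∀ s, 0 < g s := fun s => ha.trans_le (hgab s).1
  refine ⟨fun s x hx => ?_, fun K hK hKc ε hε => ?_⟩
  · have hx₀g : x₀ * g s ≤ x₀ * b := mul_le_mul_of_nonneg_left (hgab s).2 hx₀.le
    exact eq_add_of_sub_eq' (cdf'_const_mul_sub_eq_integral hf hfUdens (hgpos s) hx₀g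
      (hx₀g.trans hx))
  have hTpos : ∀ᶠ x in atTop, 0 < tail P U x :=
    hRVU.eventually_ne_zero_s15.mono fun x hx => ENNReal.toReal_nonneg.lt_of_ne' hx
  have hRVf : RegVary fU (-β - 1) := .of_tendsto_mul_div hβ.ne'
    (tendsto_mul_div_of_regVary hf (fun _ _ => tail_sub_eq_integral hf hfUdens hU) hTpos hRVU)
    hRVU
  have hunif := hRVf.tendstoUniformlyOn_div_of_antitoneOn hf
    ((eventually_ge_atTop x₀).mono fun y hy => (hfUpos y hy).le) hKc
    (hK.trans Ioc_subset_Ioi_self)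
  obtain ⟨Y, hY⟩ := eventually_atTop.1
    ((Metric.tendstoUniformlyOn_iff.1 hunif ε hε).and (eventually_ge_atTop 0))
  have hb : 0 < b := (hgpos 0).trans_le (hgab 0).2
  refine ⟨b * Y, fun x hx => ae_of_all _ fun s t ht => ?_⟩
  have hx0 : 0 ≤ x := (mul_nonneg hb.le (hY Y le_rfl).2).trans hx
  have hxg : Y ≤ x / g s :=
    ((le_div_iff₀' hb).2 hx).trans (div_le_div_of_nonneg_left hx0 (hgpos s) (hgab s).2)
  rw [mul_div_assoc, div_div_div_cancel_right₀ (hgpos s).ne', ← Real.dist_eq, dist_comm]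
  exact ((hY _ hxg).1 t ht).le

theorem stmt15 {Ω : Type*} [MeasurableSpace Ω] (P : Measure Ω) [IsProbabilityMeasure P]
    (U S : Ω → ℝ) (hU : Measurable U) (hS : Measurable S)
    (hindep : IndepFun U S P)
    (hUpos : ∀ ω, 0 ≤ U ω) (hSpos : ∀ ω, 0 ≤ S ω)
    (g : ℝ → ℝ) (hg : Measurable g) (a b : ℝ) (ha : 0 < a)
    (hgab : ∀ s, a ≤ g s ∧ g s ≤ b)
    (β x₀ : ℝ) (hβ : 0 < β) (hx₀ : 0 < x₀)
    (hRVU : RegVary (tail P U) (-β))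
    (fU : ℝ → ℝ)
    (hfUpos : ∀ x, x₀ ≤ x → 0 < fU x)
    (hfUmono : ∀ x y, x₀ ≤ x → x ≤ y → fU y ≤ fU x)
    (hfUcont : ContinuousOn fU (Set.Ici x₀))
    (hfUdens : ∀ x, x₀ ≤ x → cdf' P U x = cdf' P U x₀ + ∫ y in x₀..x, fU y) :
    -- the conditional density of L = g(S)U given S = s is fU (x / g s) / g s ...
    (∀ s x : ℝ, x₀ * b ≤ x →
      (P {ω | g s * U ω ≤ x}).toReal =
        (P {ω | g s * U ω ≤ x₀ * b}).toReal + ∫ y in (x₀ * b)..x, fU (y / g s) / g s) ∧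
    -- ... and the uniform (essential supremum) regular-variation condition holds
    (∀ K : Set ℝ, K ⊆ Set.Ioc 0 1 → IsCompact K → ∀ ε > 0, ∃ X₀ : ℝ, ∀ x ≥ X₀,
      ∀ᵐ s ∂(P.map S), ∀ t ∈ K,
        |(fU (t * x / g s) / g s) / (fU (x / g s) / g s) - t ^ (-β - 1)| ≤ ε) :=
  stmt15_general P U S hU g a b ha hgab β x₀ hβ hx₀ hRVU fU hfUpos hfUmono hfUdens
end
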